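/- arXiv:1508.00714 — 3 statements merged into one kernel-verified Lean document; each statement's English description precedes it below -/
import Mathlib

section
/- Let 0 < s < 1 and μ > 0 be real numbers. Then the integrand below is nonnegative and Lebesgue integrable on (0,∞), and s · ∫₀^∞ (cosh t − e^{−μt}) · (sinh t)^{−s−1} dt = 2^s · Γ(1−s) · Γ((μ+1+s)/2) / Γ((μ+1−s)/2). -/
/-!
The substitution `x = e^{-2t}` turns `∫₀^∞ e^{-bt} (sinh t)^{-s} dt` into the Beta integral
`2^{s-1} B((b+s)/2, 1-s)`. Writing `f` for the integrand of the theorem and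
`G(t) = (e^{-(μ+1)t} - 1) (sinh t)^{-s}`, one has `G' = s f - (μ+1-s) e^{-(μ+1)t} (sinh t)^{-s}`,
and `G` vanishes at `0` and at `∞`; so `s ∫ f` is `(μ+1-s) 2^{s-1} B((μ+1+s)/2, 1-s)`, which
`Γ(z+1) = z Γ(z)` rewrites into the stated form. Integrability of `f` comes from
`0 ≤ cosh t - e^{-μt} ≤ (1+μ) sinh t`, which dominates `f` by `(1+μ) (sinh t)^{-s}`.
-/

open MeasureTheory Real Set Filter Topology

theorem integral_Ioo_rpow_mul_one_sub_rpow {u v : ℝ} (hu : 0 < u) (hv : 0 < v) :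
    ∫ x in Ioo (0 : ℝ) 1, x ^ (u - 1) * (1 - x) ^ (v - 1)
      = Gamma u * Gamma v / Gamma (u + v) := by
  have hbeta : Complex.betaIntegral u v
      = ((∫ x in Ioo (0 : ℝ) 1, x ^ (u - 1) * (1 - x) ^ (v - 1) : ℝ) : ℂ) := by
    have hcongr : EqOn (fun x : ℝ => (x : ℂ) ^ ((u : ℂ) - 1) * (1 - (x : ℂ)) ^ ((v : ℂ) - 1))
        (fun x : ℝ => ((x ^ (u - 1) * (1 - x) ^ (v - 1) : ℝ) : ℂ)) (uIcc 0 1) := by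
      intro x hx
      rw [uIcc_of_le zero_le_one] at hx
      push_cast [Complex.ofReal_cpow hx.1, Complex.ofReal_cpow (sub_nonneg.2 hx.2)]
      rfl
    rw [Complex.betaIntegral, intervalIntegral.integral_congr hcongr,
      intervalIntegral.integral_ofReal, intervalIntegral.integral_of_le zero_le_one,
      integral_Ioc_eq_integral_Ioo]
  have key := Complex.Gamma_mul_Gamma_eq_betaIntegral (s := u) (t := v)
    (by simpa using hu) (by simpa using hv)
  rw [hbeta, ← Complex.ofReal_add, Complex.Gamma_ofReal, Complex.Gamma_ofReal,
    Complex.Gamma_ofReal] at key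
  norm_cast at key
  rw [key, mul_div_cancel_left₀ _ (Gamma_pos_of_pos (add_pos hu hv)).ne']

theorem image_exp_neg_two_mul_Ioi : (fun t : ℝ => exp (-2 * t)) '' Ioi 0 = Ioo 0 1 := by
  ext x
  constructor
  · rintro ⟨t, ht, rfl⟩
    exact ⟨exp_pos _, exp_lt_one_iff.2 (by linarith [mem_Ioi.1 ht])⟩
  · rintro ⟨hx0, hx1⟩
    refine ⟨-log x / 2, by simpa using log_neg hx0 hx1, ?_⟩
    simp [mul_div_cancel₀, exp_log hx0]

theorem two_mul_exp_neg_two_mul_beta_integrand {b s t : ℝ} (ht : 0 < t) :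
    2 * exp (-2 * t) * (exp (-2 * t) ^ ((b + s) / 2 - 1) * (1 - exp (-2 * t)) ^ (1 - s - 1))
      = 2 ^ (1 - s) * (exp (-b * t) * sinh t ^ (-s)) := by
  have hsinh : sinh t = exp t * (1 - exp (-2 * t)) / 2 := by
    rw [sinh_eq, mul_sub, mul_one, ← exp_add]; ring_nf
  have h1 : 0 ≤ 1 - exp (-2 * t) := sub_nonneg.2 (exp_le_one_iff.2 (by linarith))
  rw [hsinh, div_rpow (by positivity) zero_le_two, mul_rpow (exp_pos t).le h1,
    ← exp_mul, ← exp_mul, sub_sub_cancel_left, rpow_sub zero_lt_two, rpow_one,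
    rpow_neg zero_le_two]
  have h2s : (2 : ℝ) ^ s ≠ 0 := by positivity
  field_simp
  rw [← exp_add, mul_assoc, ← exp_add, mul_comm]
  ring_nf

theorem integral_exp_neg_mul_mul_sinh_rpow_neg {b s : ℝ} (hbs : 0 < b + s) (hs : s < 1) :
    ∫ t in Ioi 0, exp (-b * t) * sinh t ^ (-s)
      = 2 ^ (s - 1) * Gamma ((b + s) / 2) * Gamma (1 - s) / Gamma ((b - s) / 2 + 1) := by
  have hderiv : ∀ t ∈ Ioi (0 : ℝ),
      HasDerivWithinAt (fun t => exp (-2 * t)) (-(2 * exp (-2 * t))) (Ioi 0) t := fun t _ =>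
    ((hasDerivAt_id' t).const_mul (-2)).exp.hasDerivWithinAt.congr_deriv (by ring)
  have hinj : InjOn (fun t : ℝ => exp (-2 * t)) (Ioi 0) := fun t _ t' _ h => by
    simpa using exp_injective h
  have hchange := integral_image_eq_integral_abs_deriv_smul measurableSet_Ioi hderiv hinj
    (fun x => x ^ ((b + s) / 2 - 1) * (1 - x) ^ (1 - s - 1))
  rw [image_exp_neg_two_mul_Ioi, integral_Ioo_rpow_mul_one_sub_rpow (by linarith) (by linarith),
    setIntegral_congr_fun measurableSet_Ioi fun t ht => by
      rw [smul_eq_mul, abs_neg, abs_of_pos (by positivity),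
        two_mul_exp_neg_two_mul_beta_integrand ht],
    integral_const_mul] at hchange
  rw [show (b + s) / 2 + (1 - s) = (b - s) / 2 + 1 by ring] at hchange
  rw [mul_assoc, mul_div_assoc, hchange, ← mul_assoc, ← rpow_add zero_lt_two]
  norm_num

theorem integrableOn_exp_neg_mul_mul_sinh_rpow_neg {b s : ℝ} (hbs : 0 < b + s) (hs : s < 1) :
    IntegrableOn (fun t => exp (-b * t) * sinh t ^ (-s)) (Ioi 0) := by
  refine Integrable.of_integral_ne_zero ?_
  rw [integral_exp_neg_mul_mul_sinh_rpow_neg hbs hs]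
  have := Gamma_pos_of_pos (by linarith : 0 < (b + s) / 2)
  have := Gamma_pos_of_pos (by linarith : 0 < 1 - s)
  have := Gamma_pos_of_pos (by linarith : 0 < (b - s) / 2 + 1)
  positivity

theorem one_sub_exp_neg_mul_le_mul_sinh {c t : ℝ} (hc : 0 ≤ c) (ht : 0 ≤ t) :
    1 - exp (-c * t) ≤ c * sinh t := by
  nlinarith [add_one_le_exp (-c * t), self_le_sinh_iff.2 ht]

theorem cosh_sub_exp_neg_mul_nonneg {μ t : ℝ} (hμ : 0 ≤ μ) (ht : 0 ≤ t) :
    0 ≤ cosh t - exp (-μ * t) := by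
  linarith [one_le_cosh t, exp_le_one_iff.2 (by nlinarith : -μ * t ≤ 0)]

theorem cosh_sub_exp_neg_mul_le {μ t : ℝ} (hμ : 0 ≤ μ) (ht : 0 ≤ t) :
    cosh t - exp (-μ * t) ≤ (1 + μ) * sinh t := by
  have hcosh : cosh t - sinh t ≤ 1 := by
    rw [cosh_sub_sinh]; exact exp_le_one_iff.2 (by linarith)
  linarith [one_sub_exp_neg_mul_le_mul_sinh hμ ht]

theorem integrableOn_cosh_sub_exp_neg_mul_mul_sinh_rpow {s μ : ℝ} (hs0 : 0 < s) (hs1 : s < 1)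
    (hμ : 0 ≤ μ) :
    IntegrableOn (fun t => (cosh t - exp (-μ * t)) * sinh t ^ (-s - 1)) (Ioi 0) := by
  have hdom : IntegrableOn (fun t => (1 + μ) * sinh t ^ (-s)) (Ioi 0) := by
    simpa [IntegrableOn] using
      (integrableOn_exp_neg_mul_mul_sinh_rpow_neg (b := 0) (by simpa) hs1).const_mul (1 + μ)
  refine hdom.mono' (by fun_prop) ((ae_restrict_iff' measurableSet_Ioi).2 ?_)
  refine .of_forall fun t (ht : 0 < t) => ?_
  have hsinh := sinh_pos_iff.2 ht
  rw [norm_of_nonneg (mul_nonneg (cosh_sub_exp_neg_mul_nonneg hμ ht.le) (by positivity)),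
    rpow_sub_one hsinh.ne', mul_div_assoc', div_le_iff₀ hsinh, mul_right_comm]
  exact mul_le_mul_of_nonneg_right (cosh_sub_exp_neg_mul_le hμ ht.le) (by positivity)

noncomputable def subordinationPrimitive (μ s t : ℝ) : ℝ :=
  (exp (-(μ + 1) * t) - 1) * sinh t ^ (-s)

@[simp]
theorem subordinationPrimitive_zero (μ s : ℝ) : subordinationPrimitive μ s 0 = 0 := by
  simp [subordinationPrimitive]

theorem hasDerivAt_subordinationPrimitive (μ s : ℝ) {t : ℝ} (ht : 0 < t) :
    HasDerivAt (subordinationPrimitive μ s)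
      (s * ((cosh t - exp (-μ * t)) * sinh t ^ (-s - 1))
        - (μ + 1 - s) * (exp (-(μ + 1) * t) * sinh t ^ (-s))) t := by
  have hsinh := sinh_pos_iff.2 ht
  have hexp := (((hasDerivAt_id' t).const_mul (-(μ + 1))).exp).sub_const 1
  have hpow := (hasDerivAt_sinh t).rpow_const (p := -s) (Or.inl hsinh.ne')
  refine (hexp.mul hpow).congr_deriv ?_
  have hsub : sinh t ^ (-s) = sinh t ^ (-s - 1) * sinh t := by
    rw [rpow_sub_one hsinh.ne', div_mul_cancel₀ _ hsinh.ne']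
  have hadd : exp (-(μ + 1) * t) * (sinh t + cosh t) = exp (-μ * t) := by
    rw [sinh_add_cosh, ← exp_add]; ring_nf
  rw [hsub]
  linear_combination (-s * sinh t ^ (-s - 1)) * hadd

theorem tendsto_subordinationPrimitive_atTop {μ s : ℝ} (hμ : 0 ≤ μ + 1) (hs : 0 < s) :
    Tendsto (subordinationPrimitive μ s) atTop (𝓝 0) := by
  have hsinh : Tendsto sinh atTop atTop :=
    tendsto_atTop_mono' _ ((eventually_ge_atTop 0).mono fun t ht => self_le_sinh_iff.2 ht)
      tendsto_id
  refine squeeze_zero_norm' ?_ ((tendsto_rpow_neg_atTop hs).comp hsinh)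
  filter_upwards [eventually_ge_atTop 0] with t ht
  have hexp : exp (-(μ + 1) * t) ≤ 1 := exp_le_one_iff.2 (by nlinarith)
  rw [subordinationPrimitive, norm_mul, norm_of_nonpos (by linarith),
    norm_of_nonneg (rpow_nonneg (sinh_nonneg_iff.2 ht) _)]
  exact mul_le_of_le_one_left (rpow_nonneg (sinh_nonneg_iff.2 ht) _)
    (by linarith [exp_pos (-(μ + 1) * t)])

theorem continuousWithinAt_subordinationPrimitive_zero {μ s : ℝ} (hμ : 0 ≤ μ + 1) (hs : s < 1) :
    ContinuousWithinAt (subordinationPrimitive μ s) (Ici 0) 0 := by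
  have hbound : Tendsto (fun t => (μ + 1) * sinh t ^ (1 - s)) (𝓝[≥] 0) (𝓝 0) := by
    have hcont := (continuous_sinh.rpow_const fun _ => Or.inr (by linarith : (0 : ℝ) ≤ 1 - s))
    have := (hcont.const_mul (μ + 1)).continuousWithinAt (s := Ici 0) (x := 0)
    simpa [ContinuousWithinAt, zero_rpow (by linarith : 1 - s ≠ 0)] using this
  rw [ContinuousWithinAt, subordinationPrimitive_zero]
  refine squeeze_zero_norm' ?_ hbound
  filter_upwards [self_mem_nhdsWithin] with t (ht : 0 ≤ t)
  have hsinh := sinh_nonneg_iff.2 ht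
  rw [subordinationPrimitive, norm_mul, norm_of_nonpos, norm_of_nonneg (rpow_nonneg hsinh _),
    show 1 - s = 1 + -s by ring, rpow_add' hsinh (by linarith), rpow_one, ← mul_assoc]
  · refine mul_le_mul_of_nonneg_right ?_ (rpow_nonneg hsinh _)
    linarith [one_sub_exp_neg_mul_le_mul_sinh hμ ht]
  · linarith [exp_le_one_iff.2 (by nlinarith : -(μ + 1) * t ≤ 0)]

theorem mul_integral_cosh_sub_exp_neg_mul_mul_sinh_rpow {s μ : ℝ} (hs0 : 0 < s) (hs1 : s < 1)
    (hμ : 0 ≤ μ) :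
    s * ∫ t in Ioi 0, (cosh t - exp (-μ * t)) * sinh t ^ (-s - 1)
      = (μ + 1 - s) * ∫ t in Ioi 0, exp (-(μ + 1) * t) * sinh t ^ (-s) := by
  have hf := (integrableOn_cosh_sub_exp_neg_mul_mul_sinh_rpow hs0 hs1 hμ).const_mul s
  have hh := (integrableOn_exp_neg_mul_mul_sinh_rpow_neg (b := μ + 1) (by linarith) hs1).const_mul
    (μ + 1 - s)
  have hftc := integral_Ioi_of_hasDerivAt_of_tendsto
    (continuousWithinAt_subordinationPrimitive_zero (by linarith) hs1)
    (fun t ht => hasDerivAt_subordinationPrimitive μ s ht) (hf.sub hh)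
    (tendsto_subordinationPrimitive_atTop (by linarith) hs0)
  rw [integral_sub hf hh, integral_const_mul, integral_const_mul, subordinationPrimitive_zero,
    sub_zero] at hftc
  linarith

/-- Subordination identity for the conformally invariant fractional
sublaplacian (key step in the proof of Proposition 4.1):
s ∫₀^∞ (cosh t − e^{−μt}) (sinh t)^{−s−1} dt
  = 2^s Γ(1−s) Γ((μ+1+s)/2) / Γ((μ+1−s)/2). -/
theorem subordination_identity_nonhomogeneous (s μ : ℝ)
    (hs0 : 0 < s) (hs1 : s < 1) (hμ : 0 < μ) :
    (∀ t ∈ Set.Ioi (0 : ℝ),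
      0 ≤ (Real.cosh t - Real.exp (-μ * t)) * Real.sinh t ^ (-s - 1)) ∧
    IntegrableOn (fun t : ℝ =>
        (Real.cosh t - Real.exp (-μ * t)) * Real.sinh t ^ (-s - 1))
      (Set.Ioi (0 : ℝ)) volume ∧
    s * ∫ t in Set.Ioi (0 : ℝ),
        (Real.cosh t - Real.exp (-μ * t)) * Real.sinh t ^ (-s - 1)
      = (2 : ℝ) ^ s * Real.Gamma (1 - s) * Real.Gamma ((μ + 1 + s) / 2) /
          Real.Gamma ((μ + 1 - s) / 2) := by
  refine ⟨fun t (ht : 0 < t) => mul_nonneg (cosh_sub_exp_neg_mul_nonneg hμ.le ht.le)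
      (rpow_nonneg (sinh_nonneg_iff.2 ht.le) _),
    integrableOn_cosh_sub_exp_neg_mul_mul_sinh_rpow hs0 hs1 hμ.le, ?_⟩
  have hpos : 0 < (μ + 1 - s) / 2 := by linarith
  rw [mul_integral_cosh_sub_exp_neg_mul_mul_sinh_rpow hs0 hs1 hμ.le,
    integral_exp_neg_mul_mul_sinh_rpow_neg (by linarith) hs1, Gamma_add_one hpos.ne',
    rpow_sub zero_lt_two, rpow_one]
  have hΓ := (Gamma_pos_of_pos hpos).ne'
  have hne : μ + 1 - s ≠ 0 := by linarith
  field_simp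
end

section
/- Let a be a real number with −1 < a < 0. Then the function t ↦ cosh t · (sinh t)^{a−1} − t^{a−1} is Lebesgue integrable on (0,∞) and ∫₀^∞ (cosh t · (sinh t)^{a−1} − t^{a−1}) dt = 0. -/
/-!
The integrand is the derivative of `(sinh t ^ a - t ^ a) / a`, which tends to `0` at `∞` because
`a < 0`, and at `0⁺` because `sinh t - t = O(t³)` makes `sinh t ^ a - t ^ a = O(t ^ (a + 2))`.
Splitting the integrand as `(cosh t - 1) * sinh t ^ (a - 1) - (t ^ (a - 1) - sinh t ^ (a - 1))`,
the first term is `O(t ^ (a + 1))` and, by the same estimate for the exponent `a - 1`, the second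
is `O(t ^ a)`; both are integrable at `0` since `-1 < a`.
-/

open MeasureTheory Real Set Filter Topology

namespace Real

lemma cosh_sub_one_le_mul_sinh {t : ℝ} (ht : 0 ≤ t) : cosh t - 1 ≤ t * sinh t := by
  have h := (convex_Icc 0 t).image_sub_le_mul_sub_of_deriv_le continuous_cosh.continuousOn
    differentiable_cosh.differentiableOn (C := sinh t) (fun x hx => by
      rw [interior_Icc] at hx
      rw [deriv_cosh]
      exact sinh_le_sinh.mpr hx.2.le) 0 (left_mem_Icc.mpr ht) t (right_mem_Icc.mpr ht) ht
  simpa [mul_comm] using h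

lemma sinh_sub_self_le_sq_mul_sinh {t : ℝ} (ht : 0 ≤ t) : sinh t - t ≤ t ^ 2 * sinh t := by
  have h := (convex_Icc 0 t).image_sub_le_mul_sub_of_deriv_le (f := fun x => sinh x - x)
    (by fun_prop) (by fun_prop) (C := t * sinh t) (fun x hx => by
      rw [interior_Icc] at hx
      rw [((hasDerivAt_sinh x).fun_sub (hasDerivAt_id' x)).deriv]
      calc cosh x - 1 ≤ cosh t - 1 := by
            gcongr
            exact cosh_le_cosh.mpr (by rw [abs_of_pos hx.1, abs_of_nonneg ht]; exact hx.2.le)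
        _ ≤ t * sinh t := cosh_sub_one_le_mul_sinh ht) 0 (left_mem_Icc.mpr ht) t
      (right_mem_Icc.mpr ht) ht
  simp only [sinh_zero, sub_zero] at h
  linarith

lemma tendsto_sinh_atTop : Tendsto sinh atTop atTop :=
  tendsto_atTop_mono' atTop (eventually_ge_atTop 0 |>.mono fun _ hx => self_le_sinh_iff.mpr hx)
    tendsto_id

lemma rpow_sub_rpow_le_of_nonpos {p t s : ℝ} (hp : p ≤ 0) (ht : 0 < t) (hts : t ≤ s) :
    t ^ p - s ^ p ≤ -p * t ^ (p - 1) * (s - t) := by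
  have h := (convex_Icc t s).mul_sub_le_image_sub_of_le_deriv (f := fun x => x ^ p)
    (fun x hx => (continuousAt_rpow_const _ _ (Or.inl (ht.trans_le hx.1).ne')).continuousWithinAt)
    (fun x hx => by
      rw [interior_Icc] at hx
      exact (hasDerivAt_rpow_const (Or.inl (ht.trans hx.1).ne')).differentiableAt
        |>.differentiableWithinAt)
    (C := p * t ^ (p - 1)) (fun x hx => by
      rw [interior_Icc] at hx
      rw [deriv_rpow_const]
      exact mul_le_mul_of_nonpos_left (rpow_le_rpow_of_nonpos ht hx.1.le (by linarith)) hp)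
    t (left_mem_Icc.mpr hts) s (right_mem_Icc.mpr hts) hts
  linarith

lemma hasDerivAt_sinh_rpow (a : ℝ) {x : ℝ} (hx : 0 < x) :
    HasDerivAt (fun t => sinh t ^ a) (a * sinh x ^ (a - 1) * cosh x) x :=
  (hasDerivAt_rpow_const (Or.inl (sinh_pos_iff.mpr hx).ne')).comp x (hasDerivAt_sinh x)

lemma tendsto_sinh_rpow_atTop_zero {a : ℝ} (ha : a < 0) :
    Tendsto (fun t => sinh t ^ a) atTop (𝓝 0) :=
  (tendsto_rpow_neg_atTop (neg_pos.mpr ha)).comp tendsto_sinh_atTop |>.congr fun t => by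
    simp

end Real

lemma integrableOn_Ioi_cosh_mul_sinh_rpow {a c : ℝ} (ha : a < 0) (hc : 0 < c) :
    IntegrableOn (fun t => cosh t * sinh t ^ (a - 1)) (Ioi c) := by
  refine integrableOn_Ioi_deriv_of_nonneg' (g := fun t => sinh t ^ a / a) (fun x hx => ?_)
    (fun x hx => ?_) ((tendsto_sinh_rpow_atTop_zero ha).div_const a)
  · exact (hasDerivAt_sinh_rpow a (hc.trans_le hx)).div_const a |>.congr_deriv (by
      field_simp [ha.ne])
  · have := sinh_pos_iff.mpr (hc.trans hx)
    positivity

lemma hasDerivAt_sinh_rpow_sub_rpow_div {a x : ℝ} (ha : a ≠ 0) (hx : 0 < x) :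
    HasDerivAt (fun t => (sinh t ^ a - t ^ a) / a) (cosh x * sinh x ^ (a - 1) - x ^ (a - 1)) x :=
  ((hasDerivAt_sinh_rpow a hx).sub (hasDerivAt_rpow_const (Or.inl hx.ne'))).div_const a
    |>.congr_deriv (by field_simp)

lemma abs_sinh_rpow_sub_rpow_le {a t : ℝ} (ha : a ≤ 0) (ht : 0 < t) :
    |sinh t ^ a - t ^ a| ≤ -a * t ^ (a + 1) * sinh t := by
  have hts : t ≤ sinh t := self_le_sinh_iff.mpr ht.le
  rw [abs_sub_comm, abs_of_nonneg (sub_nonneg.mpr (rpow_le_rpow_of_nonpos ht hts ha))]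
  calc t ^ a - sinh t ^ a ≤ -a * t ^ (a - 1) * (sinh t - t) :=
        rpow_sub_rpow_le_of_nonpos ha ht hts
    _ ≤ -a * t ^ (a - 1) * (t ^ 2 * sinh t) := by
        gcongr
        · exact mul_nonneg (neg_nonneg.mpr ha) (rpow_nonneg ht.le _)
        · exact sinh_sub_self_le_sq_mul_sinh ht.le
    _ = -a * t ^ (a + 1) * sinh t := by
        rw [show a + 1 = (a - 1) + (2 : ℕ) by push_cast; ring, rpow_add_natCast ht.ne']
        ring

lemma abs_cosh_mul_sinh_rpow_sub_rpow_le {a t : ℝ} (ha : a ≤ 0) (ht : 0 < t) :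
    |cosh t * sinh t ^ (a - 1) - t ^ (a - 1)| ≤ t ^ (a + 1) + (1 - a) * t ^ a * sinh t := by
  have hts : t ≤ sinh t := self_le_sinh_iff.mpr ht.le
  have hs : 0 < sinh t := ht.trans_le hts
  have hcosh : 0 ≤ (cosh t - 1) * sinh t ^ (a - 1) :=
    mul_nonneg (sub_nonneg.mpr (one_le_cosh t)) (rpow_pos_of_pos hs _).le
  have hpow : 0 ≤ t ^ (a - 1) - sinh t ^ (a - 1) :=
    sub_nonneg.mpr (rpow_le_rpow_of_nonpos ht hts (by linarith))
  have hcosh_le : (cosh t - 1) * sinh t ^ (a - 1) ≤ t ^ (a + 1) :=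
    calc (cosh t - 1) * sinh t ^ (a - 1) ≤ t * sinh t * sinh t ^ (a - 1) := by
          gcongr
          exact cosh_sub_one_le_mul_sinh ht.le
      _ = t * sinh t ^ a := by
          rw [mul_assoc, mul_comm (sinh t), ← rpow_add_one hs.ne', sub_add_cancel]
      _ ≤ t * t ^ a := mul_le_mul_of_nonneg_left (rpow_le_rpow_of_nonpos ht hts ha) ht.le
      _ = t ^ (a + 1) := by rw [rpow_add_one ht.ne']; ring
  have hpow_le : t ^ (a - 1) - sinh t ^ (a - 1) ≤ (1 - a) * t ^ a * sinh t := by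
    have := abs_sinh_rpow_sub_rpow_le (a := a - 1) (by linarith) ht
    rw [abs_sub_comm, abs_of_nonneg hpow, sub_add_cancel] at this
    linarith
  rw [show cosh t * sinh t ^ (a - 1) - t ^ (a - 1)
      = (cosh t - 1) * sinh t ^ (a - 1) - (t ^ (a - 1) - sinh t ^ (a - 1)) by ring]
  exact abs_le.mpr ⟨by linarith, by linarith⟩

lemma integrableOn_Ioc_zero_one_cosh_mul_sinh_rpow_sub_rpow {a : ℝ} (ha1 : -1 < a)
    (ha2 : a ≤ 0) :
    IntegrableOn (fun t => cosh t * sinh t ^ (a - 1) - t ^ (a - 1)) (Ioc 0 1) := by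
  have hpow {r : ℝ} (hr : -1 < r) : IntegrableOn (fun t : ℝ => t ^ r) (Ioc 0 1) :=
    (intervalIntegral.intervalIntegrable_rpow' hr).1
  have hbound : IntegrableOn (fun t => t ^ (a + 1) + (1 - a) * sinh 1 * t ^ a) (Ioc 0 1) :=
    (hpow (by linarith)).add ((hpow ha1).const_mul _)
  refine hbound.mono' ?_ ((ae_restrict_mem measurableSet_Ioc).mono fun t ht => ?_)
  · exact ContinuousOn.aestronglyMeasurable ((continuous_cosh.continuousOn.mul
      (continuous_sinh.continuousOn.rpow_const fun t ht => Or.inl (sinh_pos_iff.mpr ht.1).ne')).sub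
      (continuousOn_id.rpow_const fun t ht => Or.inl ht.1.ne')) measurableSet_Ioc
  · calc _ ≤ t ^ (a + 1) + (1 - a) * t ^ a * sinh t :=
          abs_cosh_mul_sinh_rpow_sub_rpow_le ha2 ht.1
      _ ≤ t ^ (a + 1) + (1 - a) * sinh 1 * t ^ a := by
          have := mul_le_mul_of_nonneg_left (sinh_le_sinh.mpr ht.2)
            (mul_nonneg (by linarith : 0 ≤ 1 - a) (rpow_nonneg ht.1.le a))
          linarith [mul_right_comm (1 - a) (sinh 1) (t ^ a)]

lemma tendsto_sinh_rpow_sub_rpow_nhdsGT_zero {a : ℝ} (ha1 : -1 < a) (ha2 : a ≤ 0) :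
    Tendsto (fun t => sinh t ^ a - t ^ a) (𝓝[>] 0) (𝓝 0) := by
  have hpow : Tendsto (fun t : ℝ => t ^ (a + 1)) (𝓝 0) (𝓝 0) := by
    simpa [zero_rpow (by linarith : a + 1 ≠ 0)] using
      (continuousAt_rpow_const 0 (a + 1) (Or.inr (by linarith))).tendsto
  have hlim : Tendsto (fun t => -a * t ^ (a + 1) * sinh t) (𝓝 0) (𝓝 0) := by
    simpa using (hpow.const_mul (-a)).mul (continuous_sinh.tendsto 0)
  exact squeeze_zero_norm' (eventually_nhdsWithin_of_forall fun t (ht : 0 < t) =>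
    (abs_sinh_rpow_sub_rpow_le ha2 ht :)) (hlim.mono_left nhdsWithin_le_nhds)

/-- The vanishing integral ∫₀^∞ (cosh t (sinh t)^{a−1} − t^{a−1}) dt = 0 for
−1 < a < 0 (used in the proofs of Propositions 4.1 and 4.3). -/
theorem vanishing_integral (a : ℝ) (ha1 : -1 < a) (ha2 : a < 0) :
    IntegrableOn (fun t : ℝ => Real.cosh t * Real.sinh t ^ (a - 1) - t ^ (a - 1))
      (Set.Ioi (0 : ℝ)) volume ∧
    ∫ t in Set.Ioi (0 : ℝ), (Real.cosh t * Real.sinh t ^ (a - 1) - t ^ (a - 1)) = 0 := by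
  have hint : IntegrableOn (fun t => cosh t * sinh t ^ (a - 1) - t ^ (a - 1)) (Ioi 0) := by
    rw [← Ioc_union_Ioi_eq_Ioi zero_le_one]
    exact (integrableOn_Ioc_zero_one_cosh_mul_sinh_rpow_sub_rpow ha1 ha2.le).union
      ((integrableOn_Ioi_cosh_mul_sinh_rpow ha2 one_pos).sub
        (integrableOn_Ioi_rpow_of_lt (by linarith) one_pos))
  have hcont : ContinuousWithinAt (fun t => (sinh t ^ a - t ^ a) / a) (Ici 0) 0 := by
    rw [← continuousWithinAt_Ioi_iff_Ici, ContinuousWithinAt]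
    simpa [zero_rpow ha2.ne] using (tendsto_sinh_rpow_sub_rpow_nhdsGT_zero ha1 ha2.le).div_const a
  have htop : Tendsto (fun t => (sinh t ^ a - t ^ a) / a) atTop (𝓝 0) := by
    simpa using ((tendsto_sinh_rpow_atTop_zero ha2).sub
      (tendsto_rpow_neg_atTop (neg_pos.mpr ha2))).div_const a
  refine ⟨hint, ?_⟩
  rw [integral_Ioi_of_hasDerivAt_of_tendsto hcont
    (fun x hx => hasDerivAt_sinh_rpow_sub_rpow_div ha2.ne hx) hint htop]
  simp [zero_rpow ha2.ne] -- the antiderivative is `0` at `0` because `0 ^ a = 0` for `a ≠ 0`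
end

section
/- Let x > 0 and let α, β be real numbers with 0 < α ≤ β. Then x^{β−α} · Γ(x+α) / Γ(x+β) ≤ (x+β)/(x+α). -/
open Real

/-- Since `log ∘ Γ` is convex, its slope on `[a, a + c]` is at least its slope on `[a, a + 1]`,
which is `log a` by `Γ (a + 1) = a Γ a`. -/
theorem Real.rpow_mul_Gamma_le_Gamma_add {a c : ℝ} (ha : 0 < a) (hc : 1 ≤ c) :
    a ^ c * Gamma a ≤ Gamma (a + c) := by
  have hΓa : 0 < Gamma a := Gamma_pos_of_pos ha
  have hslope : log a ≤ (log (Gamma (a + c)) - log (Gamma a)) / c := by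
    have h := convexOn_log_Gamma.secant_mono (x := a + 1) (y := a + c) (Set.mem_Ioi.2 ha)
      (Set.mem_Ioi.2 (by linarith)) (Set.mem_Ioi.2 (by linarith)) (by linarith) (by linarith)
      (by linarith)
    simpa only [Function.comp_apply, Gamma_add_one ha.ne', log_mul ha.ne' hΓa.ne',
      add_sub_cancel_left, add_sub_cancel_right, div_one] using h
  rw [le_div_iff₀ (by linarith)] at hslope
  rw [← log_le_log_iff (by positivity) (Gamma_pos_of_pos (by linarith)),
    log_mul (by positivity) hΓa.ne', log_rpow ha]
  linarith

/-- Gamma ratio bound from Section 5.3 of the paper: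
x^{β−α} Γ(x+α)/Γ(x+β) ≤ (x+β)/(x+α) for x > 0 and 0 < α ≤ β. -/
theorem gamma_ratio_bound (x α β : ℝ) (hx : 0 < x) (hα : 0 < α) (hαβ : α ≤ β) :
    x ^ (β - α) * Real.Gamma (x + α) / Real.Gamma (x + β) ≤ (x + β) / (x + α) := by
  have hxα : 0 < x + α := by linarith
  have hxβ : 0 < x + β := by linarith
  rw [div_le_div_iff₀ (Gamma_pos_of_pos hxβ) hxα]
  calc x ^ (β - α) * Gamma (x + α) * (x + α)
      ≤ (x + α) ^ (β - α) * Gamma (x + α) * (x + α) := by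
        gcongr
        linarith
    _ = (x + α) ^ (β - α + 1) * Gamma (x + α) := by rw [rpow_add_one hxα.ne']; ring
    _ ≤ Gamma (x + α + (β - α + 1)) := rpow_mul_Gamma_le_Gamma_add hxα (by linarith)
    _ = (x + β) * Gamma (x + β) := by
        rw [show x + α + (β - α + 1) = x + β + 1 by ring, Gamma_add_one hxβ.ne']
end
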